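/- Define recursively Ψ_j^{(0)} = Ψ_j and Ψ_j^{(m+1)} = −Ψ₁^{(m)}·(Ψ_{j+1}^{(m)}/Ψ₁^{(m)})′ for 0 ≤ m < k (the adjoint Darboux orbit, eq. (adjDB-eigenf) of the paper, run k steps). Then for all j ≥ 1 with k + j ≤ N, Ψ_j^{(k)} = (−1)^k·W[Ψ₁,…,Ψ_k,Ψ_{k+j}]/W[Ψ₁,…,Ψ_k]. Consequently the k-step inverse Darboux transform of Φ₁, defined as Φ₁^{(−k)} := 1/Ψ₁^{(k−1)}, equals (−1)^{k−1}·𝒲_{k−1}/𝒲_k, which is the first relation of the paper's eq. (DB-1-k). -/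

import Mathlib

open Matrix Finset


/-- Wronskian of an `m`-tuple of functions of one real variable:
`det(f_j^{(i−1)})_{1≤i,j≤m}`, with the `0×0` determinant (`W[] = 1`) equal to `1`. -/
noncomputable def wronskian (m : ℕ) (g : Fin m → ℝ → ℝ) : ℝ → ℝ :=
  fun x => (Matrix.of fun i j : Fin m => iteratedDeriv (i : ℕ) (g j) x).det

/-- The adjoint Darboux orbit: `Ψ_j^{(0)} = Ψ_j` and
`Ψ_j^{(m+1)} = −Ψ₁^{(m)}·(Ψ_{j+1}^{(m)}/Ψ₁^{(m)})′`. -/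
noncomputable def adjDarbouxPsi (Ψ : ℕ → ℝ → ℝ) : ℕ → ℕ → ℝ → ℝ
  | 0, j => Ψ j
  | m + 1, j => fun x =>
      -(adjDarbouxPsi Ψ m 1 x *
        deriv (fun y => adjDarbouxPsi Ψ m (j + 1) y / adjDarbouxPsi Ψ m 1 y) x)

theorem hasDerivAt_det {n : ℕ} (A : ℝ → Matrix (Fin n) (Fin n) ℝ)
    (A' : Matrix (Fin n) (Fin n) ℝ) (x : ℝ)
    (h : ∀ i j, HasDerivAt (fun y => A y i j) (A' i j) x) :
    HasDerivAt (fun y => (A y).det)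
      (∑ r, (Matrix.updateRow (A x) r (A' r)).det) x := by
  have key : ∀ y, (A y).det = ∑ σ : Equiv.Perm (Fin n),
      (Equiv.Perm.sign σ : ℤ) • ∏ i, A y (σ i) i := fun y => Matrix.det_apply (A y)
  simp_rw [key]
  have main : HasDerivAt (fun y => ∑ σ : Equiv.Perm (Fin n),
      (Equiv.Perm.sign σ : ℤ) • ∏ i, A y (σ i) i)
      (∑ σ : Equiv.Perm (Fin n), (Equiv.Perm.sign σ : ℤ) •
        ∑ i, (∏ j ∈ Finset.univ.erase i, A x (σ j) j) • A' (σ i) i) x := by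
    refine HasDerivAt.fun_sum fun σ _ => HasDerivAt.fun_const_smul _ ?_
    exact HasDerivAt.fun_finsetProd fun i _ => h (σ i) i
  convert main using 1
  simp_rw [Matrix.det_apply]
  rw [Finset.sum_comm]
  refine Finset.sum_congr rfl fun σ _ => ?_
  rw [← Finset.smul_sum]
  congr 1
  rw [← Equiv.sum_comp σ (fun r => ∏ i, (Matrix.updateRow (A x) r (A' r)) (σ i) i)]
  refine Finset.sum_congr rfl fun i _ => ?_
  rw [← Finset.mul_prod_erase Finset.univ _ (Finset.mem_univ i)]
  rw [Matrix.updateRow_self]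
  rw [smul_eq_mul, mul_comm]
  congr 1
  refine Finset.prod_congr rfl fun j hj => ?_
  rw [Matrix.updateRow_ne]
  exact fun hc => (Finset.mem_erase.mp hj).1 (σ.injective hc)

theorem hasDerivAt_iteratedDeriv {f : ℝ → ℝ} (hf : ContDiff ℝ (⊤ : ℕ∞) f) (p : ℕ) (x : ℝ) :
    HasDerivAt (iteratedDeriv p f) (iteratedDeriv (p + 1) f x) x := by
  have h1 : DifferentiableAt ℝ (iteratedDeriv p f) x :=
    (hf.differentiable_iteratedDeriv p (by exact_mod_cast lt_top_iff_ne_top.2 (by simp))).differentiableAt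
  have := h1.hasDerivAt
  rwa [show deriv (iteratedDeriv p f) x = iteratedDeriv (p+1) f x by
    rw [iteratedDeriv_succ]] at this

theorem hasDerivAt_wronskianAux {p : ℕ} (ord : Fin p → ℕ) (g : Fin p → ℝ → ℝ)
    (hg : ∀ j, ContDiff ℝ (⊤ : ℕ∞) (g j)) (x : ℝ) :
    HasDerivAt (fun y => (Matrix.of fun i j : Fin p => iteratedDeriv (ord i) (g j) y).det)
      (∑ r, (Matrix.of fun i j : Fin p =>
        iteratedDeriv (if i = r then ord i + 1 else ord i) (g j) x).det) x := by
  have := hasDerivAt_det (fun y => Matrix.of fun i j : Fin p => iteratedDeriv (ord i) (g j) y)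
    (Matrix.of fun i j : Fin p => iteratedDeriv (ord i + 1) (g j) x) x
    (fun i j => hasDerivAt_iteratedDeriv (hg j) (ord i) x)
  convert this using 1
  refine Finset.sum_congr rfl fun r _ => ?_
  congr 1
  ext i j
  by_cases hi : i = r
  · subst hi; simp [Matrix.updateRow_self]
  · simp [Matrix.updateRow_ne hi, hi]

theorem hasDerivAt_wronskian {m : ℕ} (g : Fin (m + 1) → ℝ → ℝ)
    (hg : ∀ j, ContDiff ℝ (⊤ : ℕ∞) (g j)) (x : ℝ) :
    HasDerivAt (wronskian (m + 1) g)
      ((Matrix.of fun i j : Fin (m + 1) =>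
        iteratedDeriv (if (i : ℕ) = m then m + 1 else (i : ℕ)) (g j) x).det) x := by
  have H := hasDerivAt_wronskianAux (fun i : Fin (m + 1) => (i : ℕ)) g hg x
  have hsum : (∑ r, (Matrix.of fun i j : Fin (m + 1) =>
        iteratedDeriv (if i = r then (i : ℕ) + 1 else (i : ℕ)) (g j) x).det)
      = (Matrix.of fun i j : Fin (m + 1) =>
        iteratedDeriv (if (i : ℕ) = m then m + 1 else (i : ℕ)) (g j) x).det := by
    rw [Finset.sum_eq_single (Fin.last m)]
    · congr 1
      ext i j
      simp only [Matrix.of_apply]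
      have : i = Fin.last m ↔ (i : ℕ) = m := by
        constructor
        · rintro rfl; simp [Fin.last]
        · intro h; exact Fin.ext h
      by_cases hi : i = Fin.last m
      · rw [if_pos hi, if_pos (this.1 hi)]
        subst hi; simp [Fin.last]
      · rw [if_neg hi, if_neg (fun hc => hi (this.2 hc))]
    · intro r _ hr
      have hrm : (r : ℕ) < m := by
        rcases lt_or_eq_of_le (Nat.lt_succ_iff.1 r.isLt) with h | h
        · exact h
        · exact absurd (Fin.ext h) hr
      set r' : Fin (m + 1) := ⟨(r : ℕ) + 1, by omega⟩ with hr'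
      apply Matrix.det_zero_of_row_eq (i := r) (j := r')
      · intro hc; have := congrArg Fin.val hc; simp [hr'] at this
      · funext j
        have h1 : r' ≠ r := by intro hc; have := congrArg Fin.val hc; simp [hr'] at this
        simp only [Matrix.of_apply, if_pos rfl, if_neg h1, hr']
        simp [Fin.ext_iff]
    · intro h; exact absurd (Finset.mem_univ _) h
  rw [hsum] at H
  exact H

section DJ
variable {R : Type*} [CommRing R]

theorem det_updateColumn_last_single {p : ℕ} (X : Matrix (Fin (p + 1)) (Fin (p + 1)) R) :
    (X.updateCol (Fin.last p) (Pi.single (Fin.last p) 1)).det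
      = (X.submatrix Fin.castSucc Fin.castSucc).det := by
  rw [Matrix.det_succ_column _ (Fin.last p), Finset.sum_eq_single (Fin.last p)]
  · have h1 : (X.updateCol (Fin.last p) (Pi.single (Fin.last p) 1)) (Fin.last p) (Fin.last p)
        = 1 := by simp [Matrix.updateCol_apply]
    have h2 : ((-1 : R)) ^ ((Fin.last p : ℕ) + (Fin.last p : ℕ)) = 1 :=
      Even.neg_one_pow ⟨p, rfl⟩
    rw [h1, h2, one_mul, one_mul]
    congr 1
    rw [Fin.succAbove_last]
    ext i j
    simp [Matrix.updateCol_apply, (Fin.castSucc_lt_last j).ne]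
  · intro i _ hi
    have : (X.updateCol (Fin.last p) (Pi.single (Fin.last p) 1)) i (Fin.last p) = 0 := by
      simp [Matrix.updateCol_apply, Pi.single_eq_of_ne hi]
    rw [this]; ring
  · intro h; exact absurd (Finset.mem_univ _) h

theorem dj_mul {n : ℕ} (M : Matrix (Fin (n + 2)) (Fin (n + 2)) R) :
    M.det * ((M.submatrix (Fin.last (n + 1)).succAbove (Fin.last (n + 1)).succAbove).det *
        (M.submatrix ((Fin.last n).castSucc).succAbove ((Fin.last n).castSucc).succAbove).det -
      (M.submatrix (Fin.last (n + 1)).succAbove ((Fin.last n).castSucc).succAbove).det *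
        (M.submatrix ((Fin.last n).castSucc).succAbove (Fin.last (n + 1)).succAbove).det)
    = M.det * (M.det *
        (M.submatrix (Fin.castSucc ∘ Fin.castSucc) (Fin.castSucc ∘ Fin.castSucc)).det) := by
  set a : Fin (n + 2) := (Fin.last n).castSucc with ha
  set b : Fin (n + 2) := Fin.last (n + 1) with hb
  have hab : a ≠ b := by
    intro h; have := congrArg Fin.val h; simp [ha, hb] at this
  set B : Matrix (Fin (n + 2)) (Fin (n + 2)) R := Matrix.of fun i j =>
    if j = a then adjugate M i a else if j = b then adjugate M i b
      else (1 : Matrix (Fin (n + 2)) (Fin (n + 2)) R) i j with hB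
  -- step 1 : M * B = C
  have hMB : M * B = (M.updateCol a (M.det • (Pi.single a 1 : Fin (n + 2) → R))).updateCol b
      (M.det • (Pi.single b 1 : Fin (n + 2) → R)) := by
    ext i j
    rw [Matrix.mul_apply]
    by_cases hja : j = a
    · subst hja
      have hBa : ∀ l, B l a = adjugate M l a := by intro l; simp [hB]
      simp_rw [hBa]
      have h2 : ∑ l, M i l * adjugate M l a = (M * adjugate M) i a := (Matrix.mul_apply).symm
      rw [h2, Matrix.mul_adjugate]
      simp [Matrix.updateCol_apply, hab, Matrix.one_apply, Pi.single_apply]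
    · by_cases hjb : j = b
      · subst hjb
        have hBb : ∀ l, B l b = adjugate M l b := by intro l; simp [hB, hja]
        simp_rw [hBb]
        have h2 : ∑ l, M i l * adjugate M l b = (M * adjugate M) i b := (Matrix.mul_apply).symm
        rw [h2, Matrix.mul_adjugate]
        simp [Matrix.updateCol_apply, Matrix.one_apply, Pi.single_apply]
      · simp only [hB, Matrix.of_apply, if_neg hja, if_neg hjb]
        simp only [Matrix.one_apply, mul_ite, mul_one, mul_zero]
        rw [Finset.sum_ite_eq' Finset.univ j (fun l => M i l)]
        simp [Matrix.updateCol_apply, hja, hjb]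
  -- step 2 : det C
  have hdetC : ((M.updateCol a (M.det • (Pi.single a 1 : Fin (n + 2) → R))).updateCol b
      (M.det • (Pi.single b 1 : Fin (n + 2) → R))).det = M.det * (M.det *
        (M.submatrix (Fin.castSucc ∘ Fin.castSucc) (Fin.castSucc ∘ Fin.castSucc)).det) := by
    rw [Matrix.det_updateCol_smul]
    rw [hb, det_updateColumn_last_single]
    have hsub : (M.updateCol a (M.det • (Pi.single a 1 : Fin (n + 2) → R))).submatrix Fin.castSucc Fin.castSucc
        = (M.submatrix Fin.castSucc Fin.castSucc).updateCol (Fin.last n)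
            (M.det • (Pi.single (Fin.last n) 1 : Fin (n + 1) → R)) := by
      ext i j
      simp only [Matrix.submatrix_apply, Matrix.updateCol_apply, ha]
      by_cases hj : j = Fin.last n
      · subst hj
        simp only [if_pos rfl, Pi.smul_apply, Pi.single_apply, Fin.castSucc_inj, smul_eq_mul]
      · rw [if_neg (fun hc => hj (Fin.castSucc_inj.mp hc)), if_neg hj]
    rw [hsub, Matrix.det_updateCol_smul, det_updateColumn_last_single,
      Matrix.submatrix_submatrix]
  -- step 3 : det B
  have hdetB : B.det = adjugate M a a * adjugate M b b - adjugate M a b * adjugate M b a := by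
    rw [← Matrix.det_submatrix_equiv_self finSumFinEquiv B]
    have hblock : B.submatrix finSumFinEquiv finSumFinEquiv = Matrix.fromBlocks 1
        (Matrix.of fun i j => B (finSumFinEquiv (Sum.inl i)) (finSumFinEquiv (Sum.inr j))) 0
        (Matrix.of fun i j => B (finSumFinEquiv (Sum.inr i)) (finSumFinEquiv (Sum.inr j))) := by
      ext i j
      rcases i with i | i <;> rcases j with j | j
      · simp only [Matrix.submatrix_apply, Equiv.coe_fn_mk, finSumFinEquiv_apply_left,
          Matrix.fromBlocks_apply₁₁, hB, Matrix.of_apply]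
        have h1 : Fin.castAdd 2 j ≠ a := by
          intro h; have := congrArg Fin.val h; simp [ha] at this; omega
        have h2 : Fin.castAdd 2 j ≠ b := by
          intro h; have := congrArg Fin.val h; simp [hb] at this; omega
        rw [if_neg h1, if_neg h2]
        simp [Matrix.one_apply, Fin.ext_iff]
      · rfl
      · simp only [Matrix.submatrix_apply, finSumFinEquiv_apply_left, finSumFinEquiv_apply_right,
          Matrix.fromBlocks_apply₂₁, hB, Matrix.of_apply]
        have h1 : Fin.castAdd 2 j ≠ a := by
          intro h; have := congrArg Fin.val h; simp [ha] at this; omega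
        have h2 : Fin.castAdd 2 j ≠ b := by
          intro h; have := congrArg Fin.val h; simp [hb] at this; omega
        rw [if_neg h1, if_neg h2]
        have : Fin.natAdd (n + 2 - 2) i ≠ Fin.castAdd 2 j := by
          intro h; have := congrArg Fin.val h; simp at this; omega
        simp [Matrix.one_apply, Fin.ext_iff]
        omega
      · rfl
    rw [hblock, Matrix.det_fromBlocks_zero₂₁, Matrix.det_one, one_mul, Matrix.det_fin_two]
    have e0 : finSumFinEquiv (Sum.inr (0 : Fin 2)) = a := by
      apply Fin.ext; simp [ha]
    have e1 : finSumFinEquiv (Sum.inr (1 : Fin 2)) = b := by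
      apply Fin.ext; simp [hb]
    simp only [Matrix.of_apply, e0, e1]
    have Baa : B a a = adjugate M a a := by simp [hB]
    have Bab : B a b = adjugate M a b := by simp [hB, hab.symm]
    have Bba : B b a = adjugate M b a := by simp [hB]
    have Bbb : B b b = adjugate M b b := by simp [hB, hab.symm]
    rw [Baa, Bab, Bba, Bbb]
  -- assemble
  have hdet : M.det * B.det = M.det * (M.det *
      (M.submatrix (Fin.castSucc ∘ Fin.castSucc) (Fin.castSucc ∘ Fin.castSucc)).det) := by
    rw [← Matrix.det_mul, hMB, hdetC]
  rw [hdetB] at hdet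
  rw [← hdet]
  congr 1
  -- express adjugate entries as minors
  have hAa : adjugate M a a = (M.submatrix a.succAbove a.succAbove).det := by
    rw [Matrix.adjugate_fin_succ_eq_det_submatrix]
    rw [Even.neg_one_pow (by exact ⟨n, by simp [ha]⟩), one_mul]
  have hAb : adjugate M b b = (M.submatrix b.succAbove b.succAbove).det := by
    rw [Matrix.adjugate_fin_succ_eq_det_submatrix]
    rw [Even.neg_one_pow (by exact ⟨n + 1, by simp [hb]⟩), one_mul]
  have hOdd : Odd ((b : ℕ) + (a : ℕ)) := by
    refine ⟨n, ?_⟩; simp [ha, hb]; ring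
  have hAab : adjugate M a b = -(M.submatrix b.succAbove a.succAbove).det := by
    rw [Matrix.adjugate_fin_succ_eq_det_submatrix, Odd.neg_one_pow hOdd]; ring
  have hAba : adjugate M b a = -(M.submatrix a.succAbove b.succAbove).det := by
    rw [Matrix.adjugate_fin_succ_eq_det_submatrix, Odd.neg_one_pow (by
      rw [Nat.add_comm]; exact hOdd)]; ring
  rw [hAa, hAb, hAab, hAba]
  ring

end DJ

theorem desnanot_jacobi {n : ℕ} {R : Type*} [CommRing R]
    (M : Matrix (Fin (n + 2)) (Fin (n + 2)) R) :
    (M.submatrix (Fin.last (n + 1)).succAbove (Fin.last (n + 1)).succAbove).det *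
        (M.submatrix ((Fin.last n).castSucc).succAbove ((Fin.last n).castSucc).succAbove).det -
      (M.submatrix (Fin.last (n + 1)).succAbove ((Fin.last n).castSucc).succAbove).det *
        (M.submatrix ((Fin.last n).castSucc).succAbove (Fin.last (n + 1)).succAbove).det
    = M.det *
        (M.submatrix (Fin.castSucc ∘ Fin.castSucc) (Fin.castSucc ∘ Fin.castSucc)).det := by
  -- generic matrix
  let P := MvPolynomial (Fin (n + 2) × Fin (n + 2)) ℤ
  let X : Matrix (Fin (n + 2)) (Fin (n + 2)) P :=
    Matrix.of fun i j => MvPolynomial.X (i, j)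
  have hXdet : X.det ≠ 0 := by
    intro h0
    have h1 := congrArg (MvPolynomial.eval (fun p : Fin (n + 2) × Fin (n + 2) =>
      if p.1 = p.2 then (1 : ℤ) else 0)) h0
    rw [RingHom.map_det, map_zero, RingHom.mapMatrix_apply] at h1
    have h2 : X.map (MvPolynomial.eval (fun p : Fin (n + 2) × Fin (n + 2) =>
        if p.1 = p.2 then (1 : ℤ) else 0)) = (1 : Matrix (Fin (n + 2)) (Fin (n + 2)) ℤ) := by
      ext i j
      simp [X, Matrix.map_apply, Matrix.one_apply]
    rw [h2, Matrix.det_one] at h1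
    exact one_ne_zero h1
  have hX := mul_left_cancel₀ hXdet (dj_mul X)
  -- transfer to R
  let φ : P →+* R := (MvPolynomial.eval₂Hom (Int.castRingHom R) (fun p => M p.1 p.2))
  have hmapX : X.map φ = M := by
    ext i j; simp [X, φ, Matrix.map_apply]; rw [MvPolynomial.eval₂Hom_X']
  have hsub : ∀ (u v : Fin (n + 1) → Fin (n + 2)),
      φ (X.submatrix u v).det = (M.submatrix u v).det := by
    intro u v
    rw [RingHom.map_det]
    congr 1
    ext i j
    simp [X, φ, Matrix.map_apply]; rw [MvPolynomial.eval₂Hom_X']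
  have hsub2 : φ (X.submatrix (Fin.castSucc ∘ Fin.castSucc) (Fin.castSucc ∘ Fin.castSucc)).det
      = (M.submatrix (Fin.castSucc ∘ Fin.castSucc) (Fin.castSucc ∘ Fin.castSucc)).det := by
    rw [RingHom.map_det]
    congr 1
    ext i j
    simp [X, φ, Matrix.map_apply]; rw [MvPolynomial.eval₂Hom_X']
  have := congrArg φ hX
  rw [map_sub, _root_.map_mul, _root_.map_mul, _root_.map_mul, hsub, hsub, hsub, hsub, hsub2,
    RingHom.map_det, RingHom.mapMatrix_apply, hmapX] at this
  exact this



theorem adj_key (N k : ℕ) (Ψ : ℕ → ℝ → ℝ) (hkN : k ≤ N)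
    (hΨ : ∀ j, 1 ≤ j → j ≤ N → ContDiff ℝ (⊤ : ℕ∞) (Ψ j))
    (hW : ∀ m, 1 ≤ m → m ≤ k → ∀ x, wronskian m (fun j : Fin m => Ψ ((j : ℕ) + 1)) x ≠ 0) :
    ∀ m, m ≤ k → ∀ j, 1 ≤ j → m + j ≤ N → ∀ x,
      adjDarbouxPsi Ψ m j x =
        (-1 : ℝ) ^ m *
          wronskian (m + 1) (fun i => if (i : ℕ) = m then Ψ (m + j) else Ψ ((i : ℕ) + 1)) x /
            wronskian m (fun i => Ψ ((i : ℕ) + 1)) x := by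
  intro m
  induction m with
  | zero =>
    intro _ j hj hjN x
    show Ψ j x = _
    unfold wronskian
    rw [Matrix.det_fin_one, Matrix.det_fin_zero]
    simp
  | succ m IH =>
    intro hm1k j hj hjN x
    have hmk : m ≤ k := Nat.le_of_succ_le hm1k
    -- the three wronskians
    set K : ℝ → ℝ := wronskian (m + 1) (fun i => Ψ ((i : ℕ) + 1)) with hKdef
    set Wm : ℝ → ℝ := wronskian m (fun i => Ψ ((i : ℕ) + 1)) with hWmdef
    set Wb : ℝ → ℝ := wronskian (m + 1)
      (fun i => if (i : ℕ) = m then Ψ (m + (j + 1)) else Ψ ((i : ℕ) + 1)) with hWbdef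
    have hK : ∀ y, K y ≠ 0 := hW (m + 1) (by omega) hm1k
    have hWm : ∀ y, Wm y ≠ 0 := by
      rcases Nat.eq_zero_or_pos m with hm | hm
      · subst hm
        intro y
        rw [hWmdef]
        unfold wronskian
        rw [Matrix.det_fin_zero]
        exact one_ne_zero
      · exact hW m hm hmk
    -- column identity : Wb with j = 1 equals K
    have hcol : wronskian (m + 1)
        (fun i => if (i : ℕ) = m then Ψ (m + 1) else Ψ ((i : ℕ) + 1)) = K := by
      have hcols : (fun i : Fin (m + 1) => if (i : ℕ) = m then Ψ (m + 1) else Ψ ((i : ℕ) + 1))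
          = fun i : Fin (m + 1) => Ψ ((i : ℕ) + 1) := by
        funext i
        by_cases h : (i : ℕ) = m
        · rw [if_pos h, h]
        · rw [if_neg h]
      rw [hcols]
    -- smoothness of columns
    have hgK : ∀ l : Fin (m + 1), ContDiff ℝ (⊤ : ℕ∞) (Ψ ((l : ℕ) + 1)) := fun l =>
      hΨ _ (by omega) (by have := l.isLt; omega)
    have hgWb : ∀ l : Fin (m + 1), ContDiff ℝ (⊤ : ℕ∞)
        ((fun i : Fin (m + 1) => if (i : ℕ) = m then Ψ (m + (j + 1)) else Ψ ((i : ℕ) + 1)) l) := by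
      intro l
      show ContDiff ℝ (⊤ : ℕ∞) (if (l : ℕ) = m then Ψ (m + (j + 1)) else Ψ ((l : ℕ) + 1))
      split_ifs with h
      · exact hΨ _ (by omega) (by omega)
      · exact hgK l
    -- derivatives
    have hKD := hasDerivAt_wronskian (fun i : Fin (m + 1) => Ψ ((i : ℕ) + 1)) hgK x
    have hbD := hasDerivAt_wronskian
      (fun i : Fin (m + 1) => if (i : ℕ) = m then Ψ (m + (j + 1)) else Ψ ((i : ℕ) + 1)) hgWb x
    set K' : ℝ := (Matrix.of fun i l : Fin (m + 1) =>
      iteratedDeriv (if (i : ℕ) = m then m + 1 else (i : ℕ)) (Ψ ((l : ℕ) + 1)) x).det with hK'def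
    set Wb' : ℝ := (Matrix.of fun i l : Fin (m + 1) =>
      iteratedDeriv (if (i : ℕ) = m then m + 1 else (i : ℕ))
        ((fun i : Fin (m + 1) => if (i : ℕ) = m then Ψ (m + (j + 1)) else Ψ ((i : ℕ) + 1)) l)
        x).det with hWb'def
    -- rewrite LHS by definition
    show -(adjDarbouxPsi Ψ m 1 x *
        deriv (fun y => adjDarbouxPsi Ψ m (j + 1) y / adjDarbouxPsi Ψ m 1 y) x) = _
    -- rewrite quotient function
    have hfun : (fun y => adjDarbouxPsi Ψ m (j + 1) y / adjDarbouxPsi Ψ m 1 y)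
        = fun y => Wb y / K y := by
      funext y
      rw [IH hmk (j + 1) (by omega) (by omega) y, IH hmk 1 (by omega) (by omega) y, hcol]
      have h1 : (-1 : ℝ) ^ m ≠ 0 := by simp
      have hKy := hK y
      have hWmy := hWm y
      field_simp
      rw [← hWbdef]
    rw [hfun, IH hmk 1 (by omega) (by omega) x, hcol]
    -- quotient rule
    have hdq : deriv (fun y => Wb y / K y) x = (Wb' * K x - Wb x * K') / K x ^ 2 := by
      rw [deriv_fun_div hbD.differentiableAt hKD.differentiableAt (hK x), hbD.deriv, hKD.deriv]
    rw [hdq]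
    -- Desnanot–Jacobi
    set M : Matrix (Fin (m + 2)) (Fin (m + 2)) ℝ := Matrix.of fun i l : Fin (m + 2) =>
      iteratedDeriv (i : ℕ)
        ((fun l' : Fin (m + 2) => if (l' : ℕ) = m + 1 then Ψ (m + (j + 1)) else Ψ ((l' : ℕ) + 1)) l)
        x with hMdef
    have hDJ := desnanot_jacobi (n := m) M
    -- identify the six determinants
    have hvala : ∀ i : Fin (m + 1),
        ((((Fin.last m).castSucc : Fin (m + 2)).succAbove i : Fin (m + 2)) : ℕ)
          = if (i : ℕ) = m then m + 1 else (i : ℕ) := by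
      intro i
      by_cases h : (i : ℕ) = m
      · rw [if_pos h]
        rw [Fin.succAbove_of_le_castSucc _ _ (by
          rw [Fin.le_def]; simp [h])]
        simp [h]
      · rw [if_neg h]
        rw [Fin.succAbove_of_castSucc_lt _ _ (by
          rw [Fin.lt_def]; simp; omega)]
        simp
    have hvalb : ∀ i : Fin (m + 1),
        (((Fin.last (m + 1) : Fin (m + 2)).succAbove i : Fin (m + 2)) : ℕ) = (i : ℕ) := by
      intro i
      rw [Fin.succAbove_last]
      simp
    have hvalc : ∀ i : Fin m, (((Fin.castSucc (Fin.castSucc i)) : Fin (m + 2)) : ℕ) = (i : ℕ) := by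
      intro i; simp
    have hDbb : (M.submatrix (Fin.last (m + 1)).succAbove (Fin.last (m + 1)).succAbove).det
        = K x := by
      rw [hKdef]
      unfold wronskian
      congr 1
      ext i l
      have hl : (l : ℕ) < m + 1 := l.isLt
      show iteratedDeriv (((Fin.last (m + 1)).succAbove i : Fin (m + 2)) : ℕ)
          (if (((Fin.last (m + 1)).succAbove l : Fin (m + 2)) : ℕ) = m + 1 then Ψ (m + (j + 1))
            else Ψ ((((Fin.last (m + 1)).succAbove l : Fin (m + 2)) : ℕ) + 1)) x
        = iteratedDeriv (i : ℕ) (Ψ ((l : ℕ) + 1)) x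
      rw [hvalb i, hvalb l, if_neg (by omega : ¬ ((l : ℕ) = m + 1))]
    have hDaa : (M.submatrix ((Fin.last m).castSucc).succAbove
        ((Fin.last m).castSucc).succAbove).det = Wb' := by
      rw [hWb'def]
      congr 1
      ext i l
      have hl : (l : ℕ) < m + 1 := l.isLt
      show iteratedDeriv ((((Fin.last m).castSucc).succAbove i : Fin (m + 2)) : ℕ)
          (if ((((Fin.last m).castSucc).succAbove l : Fin (m + 2)) : ℕ) = m + 1 then Ψ (m + (j + 1))
            else Ψ (((((Fin.last m).castSucc).succAbove l : Fin (m + 2)) : ℕ) + 1)) x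
        = iteratedDeriv (if (i : ℕ) = m then m + 1 else (i : ℕ))
            (if (l : ℕ) = m then Ψ (m + (j + 1)) else Ψ ((l : ℕ) + 1)) x
      rw [hvala i, hvala l]
      by_cases h : (l : ℕ) = m
      · simp [h]
      · simp only [if_neg h]
        rw [if_neg (by omega : ¬ ((l : ℕ) = m + 1))]
    have hDba : (M.submatrix (Fin.last (m + 1)).succAbove
        ((Fin.last m).castSucc).succAbove).det = Wb x := by
      rw [hWbdef]
      unfold wronskian
      congr 1
      ext i l
      have hl : (l : ℕ) < m + 1 := l.isLt
      show iteratedDeriv (((Fin.last (m + 1)).succAbove i : Fin (m + 2)) : ℕ)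
          (if ((((Fin.last m).castSucc).succAbove l : Fin (m + 2)) : ℕ) = m + 1 then Ψ (m + (j + 1))
            else Ψ (((((Fin.last m).castSucc).succAbove l : Fin (m + 2)) : ℕ) + 1)) x
        = iteratedDeriv (i : ℕ)
            (if (l : ℕ) = m then Ψ (m + (j + 1)) else Ψ ((l : ℕ) + 1)) x
      rw [hvalb i, hvala l]
      by_cases h : (l : ℕ) = m
      · simp [h]
      · simp only [if_neg h]
        rw [if_neg (by omega : ¬ ((l : ℕ) = m + 1))]
    have hDab : (M.submatrix ((Fin.last m).castSucc).succAbove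
        (Fin.last (m + 1)).succAbove).det = K' := by
      rw [hK'def]
      congr 1
      ext i l
      have hl : (l : ℕ) < m + 1 := l.isLt
      show iteratedDeriv ((((Fin.last m).castSucc).succAbove i : Fin (m + 2)) : ℕ)
          (if (((Fin.last (m + 1)).succAbove l : Fin (m + 2)) : ℕ) = m + 1 then Ψ (m + (j + 1))
            else Ψ ((((Fin.last (m + 1)).succAbove l : Fin (m + 2)) : ℕ) + 1)) x
        = iteratedDeriv (if (i : ℕ) = m then m + 1 else (i : ℕ)) (Ψ ((l : ℕ) + 1)) x
      rw [hvala i, hvalb l, if_neg (by omega : ¬ ((l : ℕ) = m + 1))]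
    have hDA : (M.submatrix (Fin.castSucc ∘ Fin.castSucc) (Fin.castSucc ∘ Fin.castSucc)).det
        = Wm x := by
      rw [hWmdef]
      unfold wronskian
      congr 1
      ext i l
      have hl : (l : ℕ) < m := l.isLt
      show iteratedDeriv (((Fin.castSucc (Fin.castSucc i)) : Fin (m + 2)) : ℕ)
          (if (((Fin.castSucc (Fin.castSucc l)) : Fin (m + 2)) : ℕ) = m + 1 then Ψ (m + (j + 1))
            else Ψ ((((Fin.castSucc (Fin.castSucc l)) : Fin (m + 2)) : ℕ) + 1)) x
        = iteratedDeriv (i : ℕ) (Ψ ((l : ℕ) + 1)) x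
      rw [hvalc i, hvalc l, if_neg (by omega : ¬ ((l : ℕ) = m + 1))]
    have hDM : M.det = wronskian (m + 1 + 1)
        (fun i => if (i : ℕ) = m + 1 then Ψ (m + 1 + j) else Ψ ((i : ℕ) + 1)) x := by
      rw [show m + 1 + j = m + (j + 1) from by omega]
      unfold wronskian
      rfl
    rw [hDbb, hDaa, hDba, hDab, hDA, hDM] at hDJ
    -- final algebra
    have hnum : Wb' * K x - Wb x * K' = wronskian (m + 1 + 1)
        (fun i => if (i : ℕ) = m + 1 then Ψ (m + 1 + j) else Ψ ((i : ℕ) + 1)) x * Wm x := by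
      rw [← hDJ]; ring
    rw [hnum]
    have hKx := hK x
    have hWmx := hWm x
    field_simp
    ring

/-- for `j ≥ 1` with `k + j ≤ N`,
`Ψ_j^{(k)} = (−1)^k·W[Ψ₁,…,Ψ_k,Ψ_{k+j}] / W[Ψ₁,…,Ψ_k]`; consequently, for `k ≥ 1`,
the `k`-step inverse Darboux transform of `Φ₁`, `Φ₁^{(−k)} := 1/Ψ₁^{(k−1)}`, equals
`(−1)^{k−1}·𝒲_{k−1}/𝒲_k` (the first relation of (DB-1-k)). -/
theorem adjoint_darboux_orbit_wronskian_ratio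
    (N k : ℕ) (Ψ : ℕ → ℝ → ℝ)
    (hkN : k ≤ N)
    (hΨ : ∀ j, 1 ≤ j → j ≤ N → ContDiff ℝ (⊤ : ℕ∞) (Ψ j))
    (hW : ∀ m, 1 ≤ m → m ≤ k → ∀ x,
      wronskian m (fun j => Ψ ((j : ℕ) + 1)) x ≠ 0) :
    (∀ j, 1 ≤ j → k + j ≤ N → ∀ x,
      adjDarbouxPsi Ψ k j x =
        (-1 : ℝ) ^ k *
          wronskian (k + 1) (fun i => if (i : ℕ) = k then Ψ (k + j) else Ψ ((i : ℕ) + 1)) x /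
            wronskian k (fun i => Ψ ((i : ℕ) + 1)) x) ∧
    (1 ≤ k → ∀ x,
      1 / adjDarbouxPsi Ψ (k - 1) 1 x =
        (-1 : ℝ) ^ (k - 1) *
          wronskian (k - 1) (fun i => Ψ ((i : ℕ) + 1)) x /
            wronskian k (fun i => Ψ ((i : ℕ) + 1)) x) := by
  constructor
  · intro j hj hjN x
    exact adj_key N k Ψ hkN hΨ hW k le_rfl j hj hjN x
  · intro hk x
    have h1 := adj_key N k Ψ hkN hΨ hW (k - 1) (by omega) 1 le_rfl (by omega) x
    have hcols : (fun i : Fin (k - 1 + 1) =>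
        if (i : ℕ) = k - 1 then Ψ (k - 1 + 1) else Ψ ((i : ℕ) + 1))
        = fun i : Fin (k - 1 + 1) => Ψ ((i : ℕ) + 1) := by
      funext i
      by_cases h : (i : ℕ) = k - 1
      · rw [if_pos h, h]
      · rw [if_neg h]
    rw [hcols] at h1
    rw [show k - 1 + 1 = k from by omega] at h1
    rw [h1]
    set A : ℝ := wronskian (k - 1) (fun i => Ψ ((i : ℕ) + 1)) x with hA
    set B : ℝ := wronskian k (fun i => Ψ ((i : ℕ) + 1)) x with hB
    have hBne : B ≠ 0 := hW k hk le_rfl x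
    have hAne : A ≠ 0 := by
      rcases Nat.eq_or_lt_of_le hk with h | h
      · rw [hA, show k - 1 = 0 from by omega]
        unfold wronskian
        rw [Matrix.det_fin_zero]
        exact one_ne_zero
      · exact hW (k - 1) (by omega) (by omega) x
    have hs2 : ((-1 : ℝ) ^ ((k - 1) * 2)) = 1 := Even.neg_one_pow ⟨k - 1, by ring⟩
    have hsne : ((-1 : ℝ) ^ (k - 1)) ≠ 0 := by simp
    rw [one_div, inv_div]
    field_simp
    linear_combination (-1 : ℝ) * hs2
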